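/- Let H be an equationally noetherian group and G a finitely generated H-limit group. Then for every finite subset X ⊆ G \ {1} and every ordinal γ with 1 ≤ γ ≤ Rk(G), there exists a surjective homomorphism f : G → L onto an H-limit group L with Rk(L) = γ and 1 ∉ f(X). -/

import Mathlib

open FirstOrder FirstOrder.Language Cardinal

namespace Paper

variable (L : FirstOrder.Language.{0, 0})

/-- A tuple `a` generates `M`: every element is the value of a term at `a`. -/
def Generates {M : Type*} [L.Structure M] {n : ℕ} (a : Fin n → M) : Prop :=
  ∀ y : M, ∃ t : L.Term (Fin n), t.realize a = y

/-- A type over the language `L(c₁,…,cₙ)` in `k` free variables, represented as a set of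
`L`-formulas in variables `Fin n ⊕ Fin k` (the first block playing the role of the constants). -/
def NType (n : ℕ) : Type := Σ k : ℕ, Set (L.Formula (Fin n ⊕ Fin k))

variable {L}

/-- The pair `(M, a)` realizes the type `p` (in the language with the constants interpreted
as `a`). -/
def RealizesNType {M : Type*} [L.Structure M] {n : ℕ} (a : Fin n → M) (p : NType L n) : Prop :=
  ∃ v : Fin p.1 → M, ∀ φ ∈ p.2, φ.Realize (Sum.elim a v)

variable (L) in
/-- The type `pₙ(y) = { y ≠ τ(c̄) | τ an L-term }`. -/
def pType (n : ℕ) : NType L n :=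
  ⟨1, { φ | ∃ t : L.Term (Fin n),
    φ = (Term.equal (t.relabel Sum.inl) (Term.var (Sum.inr 0))).not }⟩

/-- The complete type `p_ā(M)` of a tuple, viewed as a set of sentences of `L(c̄)`. -/
def ctype {M : Type*} [L.Structure M] {n : ℕ} (a : Fin n → M) : NType L n :=
  ⟨0, { φ | ∃ ψ : L.Formula (Fin n), ψ.Realize a ∧ φ = ψ.relabel Sum.inl }⟩

/-- A type (in the language with constants) is supported over a class `K` of models-with-tuples
if some formula, satisfiable in `K`, forces realization of the type throughout `K`. -/
def Supported {T : L.Theory} {n : ℕ} (K : Set (Σ M : Theory.ModelType.{0, 0, 0} T, Fin n → M))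
    (p : NType L n) : Prop :=
  ∃ φ : L.Formula (Fin n ⊕ Fin p.1),
    (∃ P ∈ K, ∃ v : Fin p.1 → P.1, φ.Realize (Sum.elim P.2 v)) ∧
    ∀ P ∈ K, ∀ v : Fin p.1 → P.1, φ.Realize (Sum.elim P.2 v) →
      ∀ ψ ∈ p.2, ψ.Realize (Sum.elim P.2 v)

/-- `rk`: `RankEq T n α M` means the `n`-rank of `M` is `α`. Defined by transfinite
recursion: the rank is `α ≥ 1` iff for every generating `n`-tuple `ā`, `p_ā(M)` is
supported over the class of models (with generating tuple) of `T` omitting `pₙ` and the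
complete types of all models of smaller rank. -/
def RankEq (T : L.Theory) (n : ℕ) : Ordinal.{0} → Theory.ModelType.{0, 0, 0} T → Prop :=
  Ordinal.lt_wf.fix fun α ih M =>
    1 ≤ α ∧ (∃ a : Fin n → M, Generates L a) ∧
      ∀ a : Fin n → M, Generates L a →
        Supported
          { P : Σ N : T.ModelType, Fin n → N |
            ¬ RealizesNType (L := L) P.2 (pType L n) ∧
            ∀ β : Ordinal, (h : β < α) → ∀ N : T.ModelType, ih β h N →
              ∀ b : Fin n → N, Generates L b → ¬ RealizesNType (L := L) P.2 (ctype (L := L) b) }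
          (ctype a)

/-- The class `K(T|P_{n,α})`: models of `T` with a distinguished `n`-tuple, omitting `pₙ`
(equivalently, generated by the tuple) and omitting the complete type of every `n`-generated
model of `T` of rank `< α`. -/
def Kclass (T : L.Theory) (n : ℕ) (α : Ordinal.{0}) :
    Set (Σ M : Theory.ModelType.{0, 0, 0} T, Fin n → M) :=
  { P | ¬ RealizesNType (L := L) P.2 (pType L n) ∧
    ∀ β : Ordinal, β < α → ∀ N : T.ModelType, RankEq T n β N →
      ∀ b : Fin n → N, Generates L b → ¬ RealizesNType (L := L) P.2 (ctype (L := L) b) }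

variable (L) in
/-- `n`-generated models of `T` (with countable carrier). -/
abbrev NGenModel (T : L.Theory) (n : ℕ) : Type 1 :=
  { M : Theory.ModelType.{0, 0, 0} T // ∃ a : Fin n → M, Generates L a }

instance isoSetoid {T : L.Theory} {n : ℕ} : Setoid (NGenModel L T n) where
  r M N := Nonempty (M.1 ≃[L] N.1)
  iseqv := ⟨fun M => ⟨FirstOrder.Language.Equiv.refl L M.1⟩, fun ⟨e⟩ => ⟨e.symm⟩, fun ⟨e⟩ ⟨f⟩ => ⟨FirstOrder.Language.Equiv.comp f e⟩⟩

variable (L) in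
/-- `α_n(T)`: the number of isomorphism classes of `n`-generated models of `T`. -/
def alphaCard (T : L.Theory) (n : ℕ) : Cardinal.{1} :=
  Cardinal.mk (Quotient (isoSetoid (L := L) (T := T) (n := n)))

variable (L) in
/-- `T` is `n`-consistent: it has an `n`-generated model. -/
def NConsistent (T : L.Theory) (n : ℕ) : Prop :=
  ∃ M : Theory.ModelType.{0, 0, 0} T, ∃ a : Fin n → M, Generates L a


/-! ### Universal / existential formulas, ∀∃ theories -/

variable (L) in
/-- A universal formula: universal quantifiers over a quantifier-free formula. -/
def IsUniversalFormula {α : Type} (φ : L.Formula α) : Prop :=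
  ∃ (k : ℕ) (ψ : L.BoundedFormula α k), ψ.IsQF ∧ φ = ψ.alls

variable (L) in
/-- An existential formula: existential quantifiers over a quantifier-free formula. -/
def IsExistentialFormula {α : Type} (φ : L.Formula α) : Prop :=
  ∃ (k : ℕ) (ψ : L.BoundedFormula α k), ψ.IsQF ∧ φ = ψ.exs

/-- Iterated existential quantification of the last `k` bounded variables. -/
def exsTo {α : Type} : ∀ {m k : ℕ}, L.BoundedFormula α (m + k) → L.BoundedFormula α m
  | _, 0, φ => φ
  | _, _ + 1, φ => exsTo φ.ex

variable (L) in
/-- A `∀∃`-sentence: `∀ x̄ ∃ ȳ ψ` with `ψ` quantifier-free. -/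
def IsAESentence (σ : L.Sentence) : Prop :=
  ∃ (m k : ℕ) (ψ : L.BoundedFormula Empty (m + k)), ψ.IsQF ∧ σ = (exsTo ψ).alls

variable (L) in
/-- A `∀∃`-theory. -/
def IsAETheory (T : L.Theory) : Prop := ∀ σ ∈ T, IsAESentence L σ

/-- The universal type `p_{ā,∀}(M)` of a tuple: universal sentences of `L(c̄)` true of `ā`. -/
def utype {M : Type*} [L.Structure M] {n : ℕ} (a : Fin n → M) : NType L n :=
  ⟨0, { φ | ∃ ψ : L.Formula (Fin n),
    IsUniversalFormula L ψ ∧ ψ.Realize a ∧ φ = ψ.relabel Sum.inl }⟩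

/-- A universal type is existentially supported over a class `K` if some existential formula,
satisfiable in `K`, forces its realization throughout `K`. -/
def ESupported {T : L.Theory} {n : ℕ} (K : Set (Σ M : Theory.ModelType.{0, 0, 0} T, Fin n → M))
    (p : NType L n) : Prop :=
  ∃ φ : L.Formula (Fin n ⊕ Fin p.1), IsExistentialFormula L φ ∧
    (∃ P ∈ K, ∃ v : Fin p.1 → P.1, φ.Realize (Sum.elim P.2 v)) ∧
    ∀ P ∈ K, ∀ v : Fin p.1 → P.1, φ.Realize (Sum.elim P.2 v) →
      ∀ ψ ∈ p.2, ψ.Realize (Sum.elim P.2 v)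

/-- `Rk`: the rank defined from universal types and existential supports. -/
def URankEq (T : L.Theory) (n : ℕ) : Ordinal.{0} → Theory.ModelType.{0, 0, 0} T → Prop :=
  Ordinal.lt_wf.fix fun α ih M =>
    1 ≤ α ∧ (∃ a : Fin n → M, Generates L a) ∧
      ∀ a : Fin n → M, Generates L a →
        ESupported
          { P : Σ N : Theory.ModelType.{0, 0, 0} T, Fin n → N |
            ¬ RealizesNType (L := L) P.2 (pType L n) ∧
            ∀ β : Ordinal, (h : β < α) → ∀ N : Theory.ModelType.{0, 0, 0} T, ih β h N →
              ∀ b : Fin n → N, Generates L b → ¬ RealizesNType (L := L) P.2 (utype b) }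
          (utype a)

/-- The class `K(T|Q_{n,α})` of the universal rank. -/
def UKclass (T : L.Theory) (n : ℕ) (α : Ordinal.{0}) :
    Set (Σ M : Theory.ModelType.{0, 0, 0} T, Fin n → M) :=
  { P | ¬ RealizesNType (L := L) P.2 (pType L n) ∧
    ∀ β : Ordinal, β < α → ∀ N : Theory.ModelType.{0, 0, 0} T, URankEq T n β N →
      ∀ b : Fin n → N, Generates L b → ¬ RealizesNType (L := L) P.2 (utype b) }

/-! ### Types in finitely many variables, classes of models, omitting types -/

variable (L) in
/-- A type in finitely many variables. -/
def MType : Type := Σ k : ℕ, Set (L.Formula (Fin k))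

variable (L) in
/-- A type all of whose formulas are universal. -/
def IsUniversalMType (p : MType L) : Prop := ∀ φ ∈ p.2, IsUniversalFormula L φ

/-- A model realizes a type if some tuple satisfies all of its formulas. -/
def MRealizes {T : L.Theory} (M : Theory.ModelType.{0, 0, 0} T) (p : MType L) : Prop :=
  ∃ v : Fin p.1 → M, ∀ φ ∈ p.2, φ.Realize v

/-- The class `K(T|P)` of models of `T` omitting every type in `P`. -/
def KTP (T : L.Theory) (P : Set (MType L)) : Set (Theory.ModelType.{0, 0, 0} T) :=
  { M | ∀ p ∈ P, ¬ MRealizes M p }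

/-- A type is supported over a class `K` of models of `T`. -/
def MSupported {T : L.Theory} (K : Set (Theory.ModelType.{0, 0, 0} T)) (q : MType L) : Prop :=
  ∃ φ : L.Formula (Fin q.1),
    (∃ M ∈ K, ∃ v : Fin q.1 → M, φ.Realize v) ∧
    ∀ M ∈ K, ∀ v : Fin q.1 → M, φ.Realize v → ∀ ψ ∈ q.2, ψ.Realize v

/-- A universal type is existentially supported over a class `K` of models of `T`. -/
def MESupported {T : L.Theory} (K : Set (Theory.ModelType.{0, 0, 0} T)) (q : MType L) : Prop :=
  ∃ φ : L.Formula (Fin q.1), IsExistentialFormula L φ ∧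
    (∃ M ∈ K, ∃ v : Fin q.1 → M, φ.Realize v) ∧
    ∀ M ∈ K, ∀ v : Fin q.1 → M, φ.Realize v → ∀ ψ ∈ q.2, ψ.Realize v


/-! ### Groups -/

/-- The function symbols of the language of groups. -/
inductive GroupFunc : ℕ → Type
  | mul : GroupFunc 2
  | inv : GroupFunc 1
  | one : GroupFunc 0

/-- The first-order language of groups. -/
def grpLang : FirstOrder.Language.{0, 0} := ⟨GroupFunc, fun _ => Empty⟩

/-- Any group is a `grpLang`-structure. -/
instance grpStructure (G : Type*) [Group G] : grpLang.Structure G where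
  funMap {n} f v :=
    match f with
    | .mul => v 0 * v 1
    | .inv => (v 0)⁻¹
    | .one => 1
  RelMap {n} r := r.elim

/-- The universal theory `Th_∀(H)` of a group `H`. -/
def uTheoryOf (H : Type*) [Group H] : grpLang.Theory :=
  { σ | IsUniversalFormula grpLang σ ∧ H ⊨ σ }

/-- The algebraic set `V(S)` defined by a set `S ⊆ H ∗ F(x₁,…,xₙ)` of equations. -/
def Vset {H : Type} [Group H] {n : ℕ} (S : Set (Monoid.Coprod H (FreeGroup (Fin n)))) :
    Set (Fin n → H) :=
  { g | ∀ s ∈ S, Monoid.Coprod.lift (MonoidHom.id H) (FreeGroup.lift g) s = 1 }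

/-- A group `H` is equationally noetherian if every algebraic set over `H` is defined by a
finite subsystem. -/
def EquationallyNoetherian (H : Type) [Group H] : Prop :=
  ∀ (n : ℕ) (S : Set (Monoid.Coprod H (FreeGroup (Fin n)))),
    ∃ S₀ ⊆ S, S₀.Finite ∧ Vset S = Vset S₀

/-- Bundled finitely generated `H`-limit groups (with countable-universe carrier):
finitely generated groups satisfying the universal theory of `H`. -/
def LimitGroup (H : Type) [Group H] : Type 1 :=
  { G : GrpCat.{0} // Group.FG G ∧ (G : Type) ⊨ uTheoryOf H }

instance limitGroupSetoid {H : Type} [Group H] : Setoid (LimitGroup H) where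
  r A B := Nonempty ((A.1 : Type) ≃* (B.1 : Type))
  iseqv := ⟨fun A => ⟨MulEquiv.refl _⟩, fun ⟨e⟩ => ⟨e.symm⟩, fun ⟨e⟩ ⟨f⟩ => ⟨e.trans f⟩⟩

/-- `GRank H G γ` : the group `G`, as a model of `Th_∀(H)`, has universal rank `Rk(G) = γ`
(with respect to some tuple-length). -/
def GRank (H : Type) [Group H] (G : Type) [Group G] (hmod : G ⊨ uTheoryOf H)
    (γ : Ordinal.{0}) : Prop :=
  ∃ n : ℕ, URankEq (uTheoryOf H) n γ
    (@Theory.ModelType.of grpLang (uTheoryOf H) G _ hmod One.instNonempty)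

/-- `G` is `H`-determined: some finite set `X ⊆ G \ {1}` is such that every homomorphism
from `G` to an `H`-limit group killing no element of `X` is injective. -/
def HDetermined (H : Type) [Group H] (G : Type) [Group G] : Prop :=
  ∃ X : Finset G, (1 : G) ∉ X ∧
    ∀ (L' : Type) [Group L'], Group.FG L' → (L' ⊨ uTheoryOf H) →
      ∀ f : G →* L', (∀ x ∈ X, f x ≠ 1) → Function.Injective f

end Paper

/-!
Fix a generating tuple `a` of `G`. As `H` is equationally noetherian, the relations of `a`
follow in `H` from finitely many of them, `R₀`; the implications are universal sentences, so they
hold in every model of `Th_∀(H)`. Hence a generating tuple `c` of a model `L` satisfying the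
quantifier-free formula `θ` = "the words of `R₀` vanish, the words representing `X` do not"
defines an epimorphism `G → L`, `a ↦ c`, that does not kill `X`.

Such `(L, c)` with `Rk(L) = γ` is found by descending from `G`. Let `M` have rank `δ > γ` and a
generating tuple `a` with `θ`, and let the existential `φ` support the universal type of `a` over
`K(T|Q_{n,δ})`. Then `φ ∧ θ` does not support it over the larger class `K(T|Q_{n,γ})`: support
at one generating tuple transfers to every other one through the terms expressing one tuple in
the other, so `M` would have rank `γ`. A witness lies in `K(T|Q_{n,γ})` but not in
`K(T|Q_{n,δ})`, so it realizes the universal type of a generating tuple `b` of a model of rank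
`β` with `γ ≤ β < δ`; being quantifier-free, `θ` passes to `b`, and we induct on `δ`.
-/

namespace FirstOrder.Language.BoundedFormula

variable {L : Language} {α β : Type*}

theorem IsQF.subst {k : ℕ} {φ : L.BoundedFormula α k} (h : φ.IsQF) (f : α → L.Term β) :
    (φ.subst f).IsQF := by
  induction h with
  | falsum => exact IsQF.falsum
  | of_isAtomic h =>
    cases h with
    | equal => exact (IsAtomic.equal _ _).isQF
    | rel => exact (IsAtomic.rel _ _).isQF
  | imp _ _ ih₁ ih₂ => exact ih₁.imp ih₂

theorem IsQF.iInf {ι : Type*} [Finite ι] {k : ℕ} {f : ι → L.BoundedFormula α k}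
    (h : ∀ i, (f i).IsQF) : (BoundedFormula.iInf f).IsQF := by
  unfold BoundedFormula.iInf
  suffices ∀ l : List ι, ((l.map f).foldr (· ⊓ ·) ⊤).IsQF from this _
  intro l
  induction l with
  | nil => exact IsQF.top
  | cons i l ih => exact (h i).inf ih

theorem subst_alls : ∀ {k : ℕ} (φ : L.BoundedFormula α k) (f : α → L.Term β),
    φ.alls.subst f = (φ.subst f).alls
  | 0, _, _ => rfl
  | _ + 1, φ, f => subst_alls φ.all f

theorem subst_exs : ∀ {k : ℕ} (φ : L.BoundedFormula α k) (f : α → L.Term β),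
    φ.exs.subst f = (φ.subst f).exs
  | 0, _, _ => rfl
  | _ + 1, φ, f => subst_exs φ.ex f

end FirstOrder.Language.BoundedFormula

theorem FirstOrder.Language.Formula.realize_subst {L : Language} {α β M : Type*} [L.Structure M]
    {φ : L.Formula α} {f : α → L.Term β} {v : β → M} :
    Formula.Realize (φ.subst f) v ↔ φ.Realize fun a => (f a).realize v :=
  BoundedFormula.realize_subst

namespace Paper

section Formulas

variable {L : FirstOrder.Language.{0, 0}} {α β : Type}

theorem IsUniversalFormula.subst {φ : L.Formula α} (h : IsUniversalFormula L φ)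
    (f : α → L.Term β) : IsUniversalFormula L (φ.subst f) := by
  obtain ⟨k, ψ, hψ, rfl⟩ := h
  exact ⟨k, ψ.subst f, hψ.subst f, BoundedFormula.subst_alls ψ f⟩

theorem IsExistentialFormula.subst {φ : L.Formula α} (h : IsExistentialFormula L φ)
    (f : α → L.Term β) : IsExistentialFormula L (φ.subst f) := by
  obtain ⟨k, ψ, hψ, rfl⟩ := h
  exact ⟨k, ψ.subst f, hψ.subst f, BoundedFormula.subst_exs ψ f⟩

theorem isUniversalFormula_of_isQF {φ : L.Formula α} (h : φ.IsQF) : IsUniversalFormula L φ :=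
  ⟨0, φ, h, rfl⟩

theorem IsExistentialFormula.exists_inf {φ θ : L.Formula α} (hφ : IsExistentialFormula L φ)
    (hθ : θ.IsQF) : ∃ χ : L.Formula α, IsExistentialFormula L χ ∧
      ∀ {M : Type*} [L.Structure M] (v : α → M), χ.Realize v ↔ φ.Realize v ∧ θ.Realize v := by
  obtain ⟨k, ψ, hψ, rfl⟩ := hφ
  refine ⟨(ψ ⊓ BoundedFormula.relabel (Sum.inl : α → α ⊕ Fin k) θ).exs,
    ⟨k, _, hψ.inf (hθ.relabel _), rfl⟩, fun {M} _ v => ?_⟩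
  have hθv : ∀ xs : Fin 0 → M, BoundedFormula.Realize θ v xs ↔ θ.Realize v := fun xs => by
    rw [Subsingleton.elim xs default]; rfl
  simp only [BoundedFormula.realize_exs, BoundedFormula.realize_inf,
    BoundedFormula.realize_relabel, Sum.elim_comp_inl, hθv, exists_and_right]

end Formulas

section Rank

variable {L : FirstOrder.Language.{0, 0}} {T : L.Theory} {n : ℕ}

theorem urankEq_iff {α : Ordinal} {M : T.ModelType} :
    URankEq T n α M ↔ 1 ≤ α ∧ (∃ a : Fin n → M, Generates L a) ∧
      ∀ a : Fin n → M, Generates L a → ESupported (UKclass T n α) (utype a) := by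
  rw [URankEq, WellFounded.fix_eq]
  rfl

theorem URankEq.exists_generates {α : Ordinal} {M : T.ModelType} (h : URankEq T n α M) :
    ∃ a : Fin n → M, Generates L a :=
  (urankEq_iff.1 h).2.1

theorem not_realizesNType_pType_iff {M : Type*} [L.Structure M] (a : Fin n → M) :
    ¬ RealizesNType a (pType L n) ↔ Generates L a := by
  have hreal : ∀ (t : L.Term (Fin n)) (v : Fin 1 → M),
      ((Term.equal (t.relabel Sum.inl) (Term.var (Sum.inr 0))).not.Realize (Sum.elim a v) ↔
        t.realize a ≠ v 0) := by
    simp [Term.realize_relabel]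
  unfold RealizesNType pType
  constructor
  · intro h y
    by_contra! hy
    exact h ⟨fun _ => y, by rintro φ ⟨t, rfl⟩; exact (hreal t _).2 (hy t)⟩
  · rintro h ⟨v, hv⟩
    obtain ⟨t, ht⟩ := h (v 0)
    exact (hreal t v).1 (hv _ ⟨t, rfl⟩) ht

theorem realizesNType_utype_iff {M N : Type*} [L.Structure M] [L.Structure N] (b : Fin n → N)
    (c : Fin n → M) : RealizesNType (L := L) c (utype b) ↔
      ∀ ψ : L.Formula (Fin n), IsUniversalFormula L ψ → ψ.Realize b → ψ.Realize c := by
  constructor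
  · rintro ⟨v, hv⟩ ψ hψ hb
    exact (Formula.realize_relabel (g := Sum.inl)).1 (hv _ ⟨ψ, hψ, hb, rfl⟩)
  · intro h
    exact ⟨Fin.elim0, by rintro _ ⟨ψ, hψ, hb, rfl⟩; exact Formula.realize_relabel.2 (h ψ hψ hb)⟩

theorem RealizesNType.realize_iff_of_isQF {M N : Type*} [L.Structure M] [L.Structure N]
    {b : Fin n → N} {c : Fin n → M} (hre : RealizesNType (L := L) c (utype b))
    {θ : L.Formula (Fin n)} (hθ : θ.IsQF) : θ.Realize c ↔ θ.Realize b := by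
  rw [realizesNType_utype_iff] at hre
  refine ⟨fun hc => by_contra fun hb => ?_, hre θ (isUniversalFormula_of_isQF hθ)⟩
  exact (Formula.realize_not.1 <| hre _ (isUniversalFormula_of_isQF hθ.not)
    (Formula.realize_not.2 hb)) hc

theorem RealizesNType.subst_comp_eq_iff {M N : Type*} [L.Structure M] [L.Structure N]
    {b : Fin n → N} {c : Fin n → M} (hre : RealizesNType (L := L) c (utype b))
    (r s : Fin n → L.Term (Fin n)) :
    (∀ j, (s j).realize (fun i => (r i).realize c) = c j) ↔
      ∀ j, (s j).realize (fun i => (r i).realize b) = b j := by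
  have h := fun j => hre.realize_iff_of_isQF (θ := Term.equal (Term.var j) ((s j).subst r))
    (BoundedFormula.IsAtomic.equal _ _).isQF
  simp only [Formula.realize_equal, Term.realize_var, Term.realize_subst] at h
  simp only [h, eq_comm]

theorem RealizesNType.utype_subst {M N : Type*} [L.Structure M] [L.Structure N]
    {b : Fin n → N} {c : Fin n → M} (hre : RealizesNType (L := L) c (utype b))
    (r : Fin n → L.Term (Fin n)) :
    RealizesNType (L := L) (fun i => (r i).realize c) (utype fun i => (r i).realize b) := by
  rw [realizesNType_utype_iff] at *
  intro ψ hψ hb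
  exact Formula.realize_subst.1 (hre (ψ.subst r) (hψ.subst r) (Formula.realize_subst.2 hb))

theorem Generates.of_subst {M : Type*} [L.Structure M] {c c' : Fin n → M} (hc : Generates L c)
    (s : Fin n → L.Term (Fin n)) (h : ∀ j, (s j).realize c' = c j) : Generates L c' := by
  intro y
  obtain ⟨t, rfl⟩ := hc y
  exact ⟨t.subst s, by rw [Term.realize_subst, funext h]⟩

theorem UKclass_anti {α β : Ordinal} (h : α ≤ β) : UKclass T n β ⊆ UKclass T n α :=
  fun _ hP => ⟨hP.1, fun γ hγ => hP.2 γ (hγ.trans_le h)⟩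

theorem URankEq.unique {α β : Ordinal} {M : T.ModelType} (hα : URankEq T n α M)
    (hβ : URankEq T n β M) : α = β := by
  suffices key : ∀ {α β : Ordinal}, URankEq T n α M → URankEq T n β M → ¬ α < β from
    le_antisymm (not_lt.1 (key hβ hα)) (not_lt.1 (key hα hβ))
  intro α β hα hβ hlt
  obtain ⟨-, ⟨a, ha⟩, hsup⟩ := urankEq_iff.1 hβ
  obtain ⟨φ, -, ⟨P, hP, v, hφ⟩, hforce⟩ := hsup a ha
  exact hP.2 α hlt M hα a ha ⟨v, hforce P hP v hφ⟩

theorem mem_UKclass_of_subst {γ : Ordinal} {P : Σ M : T.ModelType, Fin n → M}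
    (hP : P ∈ UKclass T n γ) {c : Fin n → P.1} (r s : Fin n → L.Term (Fin n))
    (hc : ∀ j, (s j).realize P.2 = c j) (hP₂ : ∀ i, (r i).realize c = P.2 i) :
    (⟨P.1, c⟩ : Σ M : T.ModelType, Fin n → M) ∈ UKclass T n γ := by
  obtain ⟨hgen, homit⟩ := hP
  rw [not_realizesNType_pType_iff] at hgen
  refine ⟨(not_realizesNType_pType_iff c).2 (hgen.of_subst r hP₂), fun β hβ N hN b hb hre => ?_⟩
  have hrc : (fun i => (r i).realize c) = P.2 := funext hP₂
  have hbsr := (hre.subst_comp_eq_iff r s).1 (by rwa [hrc])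
  refine homit β hβ N hN _ (hb.of_subst s hbsr) ?_
  simpa only [hrc] using hre.utype_subst r

theorem esupported_utype_iff {K : Set (Σ M : T.ModelType, Fin n → M)} {M : Type*}
    [L.Structure M] {a : Fin n → M} :
    ESupported K (utype a) ↔ ∃ φ : L.Formula (Fin n), IsExistentialFormula L φ ∧
      (∃ P ∈ K, φ.Realize P.2) ∧ ∀ P ∈ K, φ.Realize P.2 → RealizesNType (L := L) P.2 (utype a) := by
  constructor
  · rintro ⟨φ, hφ, ⟨P, hP, v, hv⟩, hforce⟩
    let e : Fin n ⊕ Fin 0 → L.Term (Fin n) := Sum.elim Term.var Fin.elim0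
    have he : ∀ {N : Type} [L.Structure N] (c : Fin n → N) (v : Fin 0 → N),
        Formula.Realize (φ.subst e) c ↔ φ.Realize (Sum.elim c v) := by
      intro N _ c v
      have hv : (fun x => (e x).realize c) = Sum.elim c v := by
        funext x
        rcases x with i | i
        · rfl
        · exact i.elim0
      exact Formula.realize_subst.trans (iff_of_eq (congrArg (Formula.Realize φ) hv))
    exact ⟨φ.subst e, hφ.subst e, ⟨P, hP, (he _ v).2 hv⟩,
      fun Q hQ hφQ => ⟨Fin.elim0, hforce Q hQ _ ((he _ _).1 hφQ)⟩⟩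
  · rintro ⟨φ, hφ, ⟨P, hP, hv⟩, hforce⟩
    let e : Fin n → L.Term (Fin n ⊕ Fin 0) := fun i => Term.var (Sum.inl i)
    have he : ∀ {N : Type} [L.Structure N] (c : Fin n → N) (v : Fin 0 → N),
        Formula.Realize (φ.subst e) (Sum.elim c v) ↔ φ.Realize c :=
      fun _ _ => Formula.realize_subst
    refine ⟨φ.subst e, hφ.subst e, ⟨P, hP, Fin.elim0, (he _ _).2 hv⟩, fun Q hQ v hφQ => ?_⟩
    obtain ⟨w, hw⟩ := hforce Q hQ ((he _ _).1 hφQ)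
    rwa [Subsingleton.elim (α := Fin 0 → Q.1) v w]

/-- If `φ` supports `utype a`, then `φ(s(x)) ∧ x = r(s(x))` supports `utype a'`. -/
theorem ESupported.utype_of_subst {γ : Ordinal} {M : Type*} [L.Structure M] {a a' : Fin n → M}
    (r s : Fin n → L.Term (Fin n)) (hr : ∀ i, (r i).realize a = a' i)
    (hs : ∀ j, (s j).realize a' = a j) (h : ESupported (UKclass T n γ) (utype a)) :
    ESupported (UKclass T n γ) (utype a') := by
  rw [esupported_utype_iff] at h ⊢
  obtain ⟨φ, hφ, ⟨P₀, hP₀, hφP₀⟩, hforce⟩ := h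
  obtain ⟨χ, hχ, hχiff⟩ := (hφ.subst s).exists_inf
    (θ := Formula.iInf fun i => Term.equal (Term.var i) ((r i).subst s))
    (BoundedFormula.IsQF.iInf fun _ => (BoundedFormula.IsAtomic.equal _ _).isQF)
  have hχ' : ∀ {N : Type} [L.Structure N] (c : Fin n → N), χ.Realize c ↔
      φ.Realize (fun j => (s j).realize c) ∧ ∀ i, c i = (r i).realize fun j => (s j).realize c := by
    intro N _ c
    rw [hχiff]
    simp only [Formula.realize_subst, Formula.realize_iInf, Formula.realize_equal,
      Term.realize_var, Term.realize_subst]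
  have hra : (fun i => (r i).realize a) = a' := funext hr
  refine ⟨χ, hχ, ?_, fun P hP hχP => ?_⟩
  · have hsr := ((hforce P₀ hP₀ hφP₀).subst_comp_eq_iff r s).2 (by rwa [hra])
    refine ⟨_, mem_UKclass_of_subst hP₀ s r (fun _ => rfl) hsr, (hχ' _).2 ⟨?_, fun i => ?_⟩⟩
    · rwa [funext hsr]
    · simp only [hsr]
  · obtain ⟨hφP, hPrs⟩ := (hχ' P.2).1 hχP
    have hmem := mem_UKclass_of_subst hP r s (fun _ => rfl) fun i => (hPrs i).symm
    have := (hforce _ hmem hφP).utype_subst r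
    rwa [hra, show (fun i => (r i).realize _) = P.2 from funext fun i => (hPrs i).symm] at this

theorem urankEq_of_esupported {γ : Ordinal} {M : T.ModelType} (h1 : 1 ≤ γ) {a : Fin n → M}
    (ha : Generates L a) (h : ESupported (UKclass T n γ) (utype a)) : URankEq T n γ M := by
  refine urankEq_iff.2 ⟨h1, ⟨a, ha⟩, fun a' ha' => ?_⟩
  choose r hr using fun i => ha (a' i)
  choose s hs using fun j => ha' (a j)
  exact h.utype_of_subst r s hr hs

theorem exists_urankEq_realize {θ : L.Formula (Fin n)} (hθ : θ.IsQF) {γ : Ordinal} (h1 : 1 ≤ γ)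
    (δ : Ordinal) (M : T.ModelType) (a : Fin n → M) (hδ : URankEq T n δ M) (ha : Generates L a)
    (hθa : θ.Realize a) (hγδ : γ ≤ δ) :
    ∃ (P : T.ModelType) (c : Fin n → P), URankEq T n γ P ∧ Generates L c ∧ θ.Realize c := by
  induction δ using WellFoundedLT.induction generalizing M with
  | _ δ IH =>
  rcases hγδ.eq_or_lt with rfl | hlt
  · exact ⟨M, a, hδ, ha, hθa⟩
  obtain ⟨φ, hφ, ⟨P₂, hP₂, hφP₂⟩, hforce⟩ := esupported_utype_iff.1 ((urankEq_iff.1 hδ).2.2 a ha)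
  obtain ⟨χ, hχ, hχiff⟩ := hφ.exists_inf hθ
  -- `φ ∧ θ` cannot support `utype a` over `K(T|Q_{n,γ})`, or `M` would have rank `γ`.
  have hnot : ¬ ∀ P ∈ UKclass T n γ, χ.Realize P.2 → RealizesNType (L := L) P.2 (utype a) :=
    fun hforceγ => hlt.ne <| URankEq.unique (urankEq_of_esupported h1 ha <|
      esupported_utype_iff.2 ⟨χ, hχ, ⟨P₂, UKclass_anti hlt.le hP₂,
        (hχiff _).2 ⟨hφP₂, ((hforce P₂ hP₂ hφP₂).realize_iff_of_isQF hθ).2 hθa⟩⟩, hforceγ⟩) hδ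
  push Not at hnot
  obtain ⟨P₁, hP₁, hχP₁, hP₁a⟩ := hnot
  obtain ⟨hφP₁, hθP₁⟩ := (hχiff _).1 hχP₁
  have hP₁δ : ¬ ∀ β < δ, ∀ N : T.ModelType, URankEq T n β N → ∀ b : Fin n → N, Generates L b →
      ¬ RealizesNType (L := L) P₁.2 (utype b) :=
    fun h => hP₁a (hforce P₁ ⟨hP₁.1, h⟩ hφP₁)
  push Not at hP₁δ
  obtain ⟨β, hβδ, N, hN, b, hb, hP₁b⟩ := hP₁δ
  have hγβ : γ ≤ β := not_lt.1 fun hβγ => hP₁.2 β hβγ N hN b hb hP₁b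
  exact IH β hβδ N b hN hb ((hP₁b.realize_iff_of_isQF hθ).1 hθP₁) hγβ

end Rank

section Groups

variable {α : Type}

def termMul (t₁ t₂ : grpLang.Term α) : grpLang.Term α := Term.func GroupFunc.mul ![t₁, t₂]

def termInv (t : grpLang.Term α) : grpLang.Term α := Term.func GroupFunc.inv ![t]

def termOne : grpLang.Term α := Term.func GroupFunc.one ![]

section Structure

variable {M : Type*} [grpLang.Structure M] (v : α → M)

@[simp]
theorem realize_termMul (t₁ t₂ : grpLang.Term α) : (termMul t₁ t₂).realize v =
    Structure.funMap (L := grpLang) GroupFunc.mul ![t₁.realize v, t₂.realize v] := by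
  simp only [termMul, Term.realize]
  congr
  funext i
  fin_cases i <;> rfl

@[simp]
theorem realize_termInv (t : grpLang.Term α) : (termInv t).realize v =
    Structure.funMap (L := grpLang) GroupFunc.inv ![t.realize v] := by
  simp only [termInv, Term.realize]
  congr
  funext i
  fin_cases i
  rfl

@[simp]
theorem realize_termOne : (termOne : grpLang.Term α).realize v =
    Structure.funMap (L := grpLang) GroupFunc.one ![] := by
  simp only [termOne, Term.realize]
  congr
  funext i
  exact i.elim0

end Structure

section Group

variable {G : Type*} [Group G]

@[simp]
theorem funMap_mul (x y : G) : Structure.funMap (L := grpLang) GroupFunc.mul ![x, y] = x * y :=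
  rfl

@[simp]
theorem funMap_inv (x : G) : Structure.funMap (L := grpLang) GroupFunc.inv ![x] = x⁻¹ :=
  rfl

@[simp]
theorem funMap_one : Structure.funMap (L := grpLang) GroupFunc.one ![] = (1 : G) :=
  rfl

theorem Generates.surjective_lift {n : ℕ} {a : Fin n → G} (ha : Generates grpLang a) :
    Function.Surjective (FreeGroup.lift a) := by
  intro y
  obtain ⟨t, rfl⟩ := ha y
  show t.realize a ∈ (FreeGroup.lift a).range
  induction t with
  | var i => exact ⟨FreeGroup.of i, FreeGroup.lift_apply_of⟩
  | func f ts ih =>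
    cases f with
    | mul => exact mul_mem (ih 0) (ih 1)
    | inv => exact inv_mem (ih 0)
    | one => exact one_mem _

variable [DecidableEq α]

def termOfWord (w : FreeGroup α) : grpLang.Term α :=
  (w.toWord.map fun p => bif p.2 then Term.var p.1 else termInv (Term.var p.1)).foldr
    termMul termOne

@[simp]
theorem realize_termOfWord (v : α → G) (w : FreeGroup α) :
    (termOfWord w).realize v = FreeGroup.lift v w := by
  conv_rhs => rw [← FreeGroup.mk_toWord (x := w)]
  rw [FreeGroup.lift_mk, termOfWord]
  induction w.toWord with
  | nil => simp
  | cons p l ih =>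
    obtain ⟨i, _ | _⟩ := p <;> simp [ih]

def wordEqOne (w : FreeGroup α) : grpLang.Formula α := Term.equal (termOfWord w) termOne

noncomputable def systemFormula (R₀ X₀ : Finset (FreeGroup α)) : grpLang.Formula α :=
  (Formula.iInf fun w : R₀ => wordEqOne w.1) ⊓ Formula.iInf fun x : X₀ => (wordEqOne x.1).not

theorem realize_wordEqOne (v : α → G) (w : FreeGroup α) :
    (wordEqOne w).Realize v ↔ FreeGroup.lift v w = 1 := by
  simp [wordEqOne]

theorem realize_systemFormula (v : α → G) (R₀ X₀ : Finset (FreeGroup α)) :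
    (systemFormula R₀ X₀).Realize v ↔
      (∀ w ∈ R₀, FreeGroup.lift v w = 1) ∧ ∀ x ∈ X₀, FreeGroup.lift v x ≠ 1 := by
  simp [systemFormula, Formula.realize_iInf, realize_wordEqOne]

theorem isQF_systemFormula (R₀ X₀ : Finset (FreeGroup α)) : (systemFormula R₀ X₀).IsQF :=
  (BoundedFormula.IsQF.iInf fun _ => (BoundedFormula.IsAtomic.equal _ _).isQF).inf
    (BoundedFormula.IsQF.iInf fun _ => (BoundedFormula.IsAtomic.equal _ _).isQF.not)

end Group

theorem exists_surjective_hom_of_ker_le {F G Q : Type*} [Group F] [Group G] [Group Q]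
    {π : F →* G} (hπ : Function.Surjective π) {g : F →* Q} (hg : Function.Surjective g)
    (hker : π.ker ≤ g.ker) : ∃ f : G →* Q, Function.Surjective f ∧ ∀ w, f (π w) = g w := by
  let f := π.liftOfRightInverse _ (Function.rightInverse_surjInv hπ) ⟨g, hker⟩
  have hf : ∀ w, f (π w) = g w := π.liftOfRightInverse_comp_apply _ _ ⟨g, hker⟩
  refine ⟨f, fun q => ?_, hf⟩
  obtain ⟨w, rfl⟩ := hg q
  exact ⟨π w, hf w⟩

variable {H : Type} [Group H]

theorem realize_of_isQF_of_forall_realize {Q : Type*} [grpLang.Structure Q] [Q ⊨ uTheoryOf H]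
    {k : ℕ} {φ : grpLang.Formula (Fin k)} (hφ : φ.IsQF) (hH : ∀ v : Fin k → H, φ.Realize v)
    (v : Fin k → Q) : φ.Realize v := by
  have hσ : (BoundedFormula.relabel (Sum.inr : Fin k → Empty ⊕ Fin k) φ).alls ∈ uTheoryOf H :=
    ⟨⟨k, _, hφ.relabel _, rfl⟩, by
      simp only [Sentence.Realize, BoundedFormula.realize_alls, Formula.realize_relabel_sumInr]
      exact hH⟩
  have := Theory.realize_sentence_of_mem (M := Q) (uTheoryOf H) hσ
  simp only [Sentence.Realize, BoundedFormula.realize_alls,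
    Formula.realize_relabel_sumInr] at this
  exact this v

/-- The group axioms are universal sentences true in `H`. -/
@[reducible]
def modelGroup (H : Type) [Group H] (P : Type*) [grpLang.Structure P] [P ⊨ uTheoryOf H] :
    Group P :=
  letI : Mul P := ⟨fun x y => Structure.funMap (L := grpLang) GroupFunc.mul ![x, y]⟩
  letI : One P := ⟨Structure.funMap (L := grpLang) GroupFunc.one ![]⟩
  letI : Inv P := ⟨fun x => Structure.funMap (L := grpLang) GroupFunc.inv ![x]⟩
  Group.ofLeftAxioms
    (fun x y z => by
      have h := realize_of_isQF_of_forall_realize (H := H)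
        (φ := Term.equal (termMul (termMul (Term.var 0) (Term.var 1)) (Term.var 2))
          (termMul (Term.var 0) (termMul (Term.var 1) (Term.var 2))))
        (BoundedFormula.IsAtomic.equal _ _).isQF (fun v => by simp [mul_assoc]) ![x, y, z]
      simp only [Formula.realize_equal, realize_termMul, Term.realize_var, Matrix.cons_val_zero,
        Matrix.cons_val_one, Matrix.cons_val] at h
      exact h)
    (fun x => by
      have h := realize_of_isQF_of_forall_realize (H := H)
        (φ := Term.equal (termMul termOne (Term.var 0)) (Term.var 0))
        (BoundedFormula.IsAtomic.equal _ _).isQF (fun v => by simp) ![x]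
      simp only [Formula.realize_equal, realize_termMul, realize_termOne, Term.realize_var,
        Matrix.cons_val_fin_one] at h
      exact h)
    (fun x => by
      have h := realize_of_isQF_of_forall_realize (H := H)
        (φ := Term.equal (termMul (termInv (Term.var 0)) (Term.var 0)) termOne)
        (BoundedFormula.IsAtomic.equal _ _).isQF (fun v => by simp) ![x]
      simp only [Formula.realize_equal, realize_termMul, realize_termInv, realize_termOne,
        Term.realize_var, Matrix.cons_val_fin_one] at h
      exact h)

theorem grpStructure_eq_of_funMap {G : Type*} [Group G] (S : grpLang.Structure G)
    (hmul : ∀ x y : G, S.funMap GroupFunc.mul ![x, y] = x * y)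
    (hinv : ∀ x : G, S.funMap GroupFunc.inv ![x] = x⁻¹)
    (hone : S.funMap GroupFunc.one ![] = 1) : S = grpStructure G := by
  obtain ⟨fm, rm⟩ := S
  congr
  · funext k f v
    cases f with
    | mul => exact (congrArg (fm _) (FinVec.etaExpand_eq v).symm).trans (hmul _ _)
    | inv => exact (congrArg (fm _) (FinVec.etaExpand_eq v).symm).trans (hinv _)
    | one => exact (congrArg (fm _) (FinVec.etaExpand_eq v).symm).trans hone
  · funext k r
    exact r.elim

theorem exists_group_eq_modelType (P : (uTheoryOf H).ModelType) :
    ∃ (Q : Type) (_ : Group Q) (_ : Q ⊨ uTheoryOf H), Theory.ModelType.of (uTheoryOf H) Q = P := by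
  obtain @⟨C, S, hM, hne⟩ := P
  let := modelGroup H C
  have hS : S = grpStructure C := grpStructure_eq_of_funMap S (fun _ _ => rfl) (fun _ => rfl) rfl
  refine ⟨C, _, hS ▸ hM, ?_⟩
  congr 1
  · exact hS.symm
  · exact proof_irrel_heq _ _

theorem exists_group_urankEq_realize {n : ℕ} {θ : grpLang.Formula (Fin n)} (hθ : θ.IsQF)
    {γ δ : Ordinal} (h1 : 1 ≤ γ) (hγδ : γ ≤ δ) {G : Type} [Group G] [G ⊨ uTheoryOf H]
    (hδ : URankEq (uTheoryOf H) n δ (Theory.ModelType.of (uTheoryOf H) G)) {a : Fin n → G}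
    (ha : Generates grpLang a) (hθa : θ.Realize a) :
    ∃ (Q : Type) (_ : Group Q) (_ : Q ⊨ uTheoryOf H) (c : Fin n → Q),
      URankEq (uTheoryOf H) n γ (Theory.ModelType.of (uTheoryOf H) Q) ∧
        Generates grpLang c ∧ θ.Realize c := by
  obtain ⟨P, c, hPγ, hc, hθc⟩ := exists_urankEq_realize hθ h1 δ _ a hδ ha hθa hγδ
  obtain ⟨Q, _, hQ, rfl⟩ := exists_group_eq_modelType P
  exact ⟨Q, _, hQ, c, hPγ, hc, hθc⟩

theorem EquationallyNoetherian.exists_finset_relations (hH : EquationallyNoetherian H) {n : ℕ}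
    (R : Set (FreeGroup (Fin n))) : ∃ R₀ : Finset (FreeGroup (Fin n)), ↑R₀ ⊆ R ∧
      ∀ d : Fin n → H, (∀ w ∈ R₀, FreeGroup.lift d w = 1) → ∀ w ∈ R, FreeGroup.lift d w = 1 := by
  obtain ⟨S₀, hS₀, hfin, hV⟩ := hH n (Monoid.Coprod.inr '' R)
  have hR₀ : (Monoid.Coprod.inr ⁻¹' S₀).Finite :=
    hfin.preimage Monoid.Coprod.inr_injective.injOn
  refine ⟨hR₀.toFinset, fun w hw => ?_, fun d hd w hw => ?_⟩
  · obtain ⟨u, hu, huw⟩ := hS₀ (hR₀.mem_toFinset.1 hw)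
    rwa [← Monoid.Coprod.inr_injective huw]
  · have hdV : d ∈ Vset S₀ := fun s hs => by
      obtain ⟨u, -, rfl⟩ := hS₀ hs
      exact hd u (hR₀.mem_toFinset.2 hs)
    rw [← hV] at hdV
    exact hdV _ ⟨w, hw, rfl⟩

/-- For each `w ∈ R` the implication `R₀ = 1 → w = 1` holds in `H`, and it is universal. -/
theorem EquationallyNoetherian.exists_finset_relations_of_model (hH : EquationallyNoetherian H)
    {n : ℕ} (R : Set (FreeGroup (Fin n))) : ∃ R₀ : Finset (FreeGroup (Fin n)), ↑R₀ ⊆ R ∧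
      ∀ (Q : Type*) [Group Q] [Q ⊨ uTheoryOf H] (c : Fin n → Q),
        (∀ w ∈ R₀, FreeGroup.lift c w = 1) → ∀ w ∈ R, FreeGroup.lift c w = 1 := by
  obtain ⟨R₀, hR₀R, hR₀⟩ := hH.exists_finset_relations R
  refine ⟨R₀, hR₀R, fun Q _ _ c hc w hw => ?_⟩
  have hR₀w := realize_of_isQF_of_forall_realize (H := H)
    (φ := (Formula.iInf fun u : R₀ => wordEqOne u.1).imp (wordEqOne w))
    ((BoundedFormula.IsQF.iInf fun _ => (BoundedFormula.IsAtomic.equal _ _).isQF).imp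
      (BoundedFormula.IsAtomic.equal _ _).isQF)
    (fun d => by
      simp only [Formula.realize_imp, Formula.realize_iInf, realize_wordEqOne, Subtype.forall]
      exact fun hd => hR₀ d hd w hw) c
  simp only [Formula.realize_imp, Formula.realize_iInf, realize_wordEqOne, Subtype.forall] at hR₀w
  exact hR₀w hc

end Groups

end Paper

theorem stmt_19_general (H : Type) [Group H] (hH : Paper.EquationallyNoetherian H)
    (G : Type) [Group G] (hmod : G ⊨ Paper.uTheoryOf H)
    (X : Finset G) (hX : (1 : G) ∉ X)
    (γ : Ordinal) (h1 : 1 ≤ γ) (hγ : ∃ δ : Ordinal, Paper.GRank H G hmod δ ∧ γ ≤ δ) :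
    ∃ (Q : Paper.LimitGroup H) (f : G →* ((Q.1 : Type))),
      Function.Surjective f ∧ Paper.GRank H (Q.1 : Type) Q.2.2 γ ∧
      ∀ x ∈ X, f x ≠ 1 := by
  obtain ⟨δ, ⟨n, hδ⟩, hγδ⟩ := hγ
  obtain ⟨a, ha⟩ : ∃ a : Fin n → G, Paper.Generates Paper.grpLang a := hδ.exists_generates
  have hπ := ha.surjective_lift
  obtain ⟨R₀, hR₀, hrel⟩ := hH.exists_finset_relations_of_model (FreeGroup.lift a).ker.carrier
  let X₀ := X.image (Function.surjInv hπ)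
  have hθa : (Paper.systemFormula R₀ X₀).Realize a := by
    refine (Paper.realize_systemFormula a R₀ X₀).2 ⟨fun w hw => hR₀ hw, fun x hx => ?_⟩
    obtain ⟨g, hg, rfl⟩ := Finset.mem_image.1 hx
    rw [Function.surjInv_eq hπ]
    exact fun h => hX (h ▸ hg)
  obtain ⟨Q, _, hQ, c, hQγ, hc, hθc⟩ :=
    Paper.exists_group_urankEq_realize (Paper.isQF_systemFormula R₀ X₀) h1 hγδ hδ ha hθa
  rw [Paper.realize_systemFormula] at hθc
  obtain ⟨f, hf, hfπ⟩ := Paper.exists_surjective_hom_of_ker_le hπ hc.surjective_lift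
    fun w hw => hrel Q c hθc.1 w hw
  refine ⟨⟨GrpCat.of Q, Group.fg_of_surjective hc.surjective_lift, hQ⟩, f, hf, ⟨n, hQγ⟩,
    fun x hx => ?_⟩
  rw [← Function.surjInv_eq hπ x, hfπ]
  exact hθc.2 _ (Finset.mem_image_of_mem _ hx)

/-- For an equationally noetherian group `H`, a finitely generated
`H`-limit group `G`, a finite `X ⊆ G \ {1}` and an ordinal `γ` with `1 ≤ γ ≤ Rk(G)`,
there is an epimorphism `f : G → L` onto an `H`-limit group `L` with `Rk(L) = γ` and
`1 ∉ f(X)`. -/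
theorem stmt_19 (H : Type) [Group H] (hH : Paper.EquationallyNoetherian H)
    (G : Type) [Group G] (hfg : Group.FG G) (hmod : G ⊨ Paper.uTheoryOf H)
    (X : Finset G) (hX : (1 : G) ∉ X)
    (γ : Ordinal) (h1 : 1 ≤ γ) (hγ : ∃ δ : Ordinal, Paper.GRank H G hmod δ ∧ γ ≤ δ) :
    ∃ (Q : Paper.LimitGroup H) (f : G →* ((Q.1 : Type))),
      Function.Surjective f ∧ Paper.GRank H (Q.1 : Type) Q.2.2 γ ∧
      ∀ x ∈ X, f x ≠ 1 :=
  stmt_19_general H hH G hmod X hX γ h1 hγ
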